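/- If ‖⟨ξ⟩^{s₂} ∫_ℝ (1-e^{iξ(ξ-2ξ₁-ξ²)})/(ξ-2ξ₁-ξ²) · f(ξ₁)g(ξ-ξ₁)/(⟨ξ₁⟩^{s₁}⟨ξ-ξ₁⟩^{s₁}) dξ₁‖_{L²} ≲ ‖f‖_{L²}‖g‖_{L²} holds for all f,g, then s₂ ≤ 4s₁. Specifically, with f = χ_{[-N,-N+N^{-1}]}, a = 1/2 + √(2N+1/4), g = χ_{[a+N-N^{-1}, a+N+N^{-1}]}, the left side tested on ξ ∈ [a-cN^{-1}, a+cN^{-1}] (small fixed c) is of size N^{1/2 + s₂/2 - 2s₁ - 1} · N^{-1/2}, while ‖f‖_{L²}‖g‖_{L²} ∼ N^{-1}, forcing s₂/2 - 2s₁ ≤ 0. -/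

import Mathlib

/-
Test the estimate on `f = 𝟙[-N, -N + 1/N]` and `g = 𝟙[a + N - 1/N, a + N + 1/N]`, where
`a² - a = 2N`. For `ξ ∈ (a, a + 1/(100N)]` and `ξ₁` in the support of `f`, `ξ - ξ₁` lies in the
support of `g` and the resonance function `θ = ξ - 2ξ₁ - ξ²` satisfies `0 < |ξθ| ≤ 1`, so
`-Im ((1 - e^{iξθ}) / θ) = ξ · sinc (ξθ) ≥ 5ξ/6`: the imaginary parts do not cancel. Since
`ξ ≈ √N` and both weights are `≈ N^{s₁}`, the left side is `≳ N^{(s₂ - 4s₁)/2} / √N` on a set of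
measure `≈ 1/N`, while `‖f‖₂ ‖g‖₂ ≈ 1/N`. Hence `N^{(s₂ - 4s₁)/2}` stays bounded as `N → ∞`.
The window for `ξ` lies to the right of `a` (the paper's is centred at `a`) so that `θ < 0`
throughout, away from the junk value of the kernel at `θ = 0`.
-/

open MeasureTheory Complex Set
open scoped ENNReal

noncomputable section

def jap (x : ℝ) : ℝ := Real.sqrt (1 + x ^ 2)

/-- Fourier-side second iterate `∫₀¹ K(1-t')∂ₓ(|S(t')u₀|²) dt'` estimate kernel:
`⟨ξ⟩^{s₂} |∫ (1-e^{iξ(ξ-2ξ₁-ξ²)})/(ξ-2ξ₁-ξ²) · f(ξ₁)g(ξ-ξ₁)/(⟨ξ₁⟩^{s₁}⟨ξ-ξ₁⟩^{s₁}) dξ₁|`. -/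
def sToKdV (s₁ s₂ : ℝ) (f g : ℝ → ℂ) (ξ : ℝ) : ℝ :=
  jap ξ ^ s₂ * ‖∫ ξ₁ : ℝ,
    ((1 - Complex.exp (Complex.I * ((ξ * (ξ - 2 * ξ₁ - ξ ^ 2) : ℝ) : ℂ))) /
        ((ξ - 2 * ξ₁ - ξ ^ 2 : ℝ) : ℂ)) *
      f ξ₁ * g (ξ - ξ₁) / ((jap ξ₁ ^ s₁ * jap (ξ - ξ₁) ^ s₁ : ℝ) : ℂ)‖

namespace SToKdV

lemma jap_pos (x : ℝ) : 0 < jap x := Real.sqrt_pos.2 (by positivity)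

lemma abs_le_jap (x : ℝ) : |x| ≤ jap x := by
  rw [jap, ← Real.sqrt_sq_eq_abs]
  exact Real.sqrt_le_sqrt (by linarith)

lemma jap_le_abs_add_one (x : ℝ) : jap x ≤ |x| + 1 :=
  Real.sqrt_le_iff.2 ⟨by positivity, by nlinarith [abs_nonneg x, sq_abs x]⟩

lemma continuous_jap : Continuous jap := by
  unfold jap
  fun_prop

lemma rpow_le_rpow_abs_mul_rpow {x y c : ℝ} (s : ℝ) (hx : 0 < x) (hy : 0 < y)
    (hxy : x ≤ c * y) (hyx : y ≤ c * x) : x ^ s ≤ c ^ |s| * y ^ s := by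
  have hc : 0 < c := pos_of_mul_pos_left (hx.trans_le hxy) hy.le
  rcases le_or_gt 0 s with hs | hs
  · calc x ^ s ≤ (c * y) ^ s := Real.rpow_le_rpow hx.le hxy hs
      _ = c ^ |s| * y ^ s := by rw [abs_of_nonneg hs, Real.mul_rpow hc.le hy.le]
  · have hyx' : y / c ≤ x := by rwa [div_le_iff₀ hc, mul_comm]
    calc x ^ s ≤ (y / c) ^ s := Real.rpow_le_rpow_of_nonpos (by positivity) hyx' hs.le
      _ = c ^ |s| * y ^ s := by
        rw [abs_of_neg hs, Real.div_rpow hy.le hc.le, Real.rpow_neg hc.le]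
        ring

lemma five_sixths_le_sinc {t : ℝ} (ht : |t| ≤ 1) : 5 / 6 ≤ Real.sinc t := by
  wlog h0 : 0 ≤ t generalizing t
  · simpa [Real.sinc_neg] using this (t := -t) (by rwa [abs_neg]) (by linarith)
  rcases h0.eq_or_lt with rfl | hpos
  · norm_num
  have hcube : t ^ 3 ≤ t := by
    nlinarith [pow_le_one₀ (n := 2) h0 ((le_abs_self t).trans ht)]
  rw [Real.sinc_of_ne_zero hpos.ne', le_div_iff₀ hpos]
  linarith [Real.sin_gt_sub_cube hpos]

lemma sin_mul_div_eq_mul_sinc (ξ : ℝ) {θ : ℝ} (hθ : θ ≠ 0) :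
    Real.sin (ξ * θ) / θ = ξ * Real.sinc (ξ * θ) := by
  rcases eq_or_ne ξ 0 with rfl | hξ
  · simp
  rw [Real.sinc_of_ne_zero (mul_ne_zero hξ hθ)]
  field_simp

lemma im_one_sub_exp_mul_I_div (p θ : ℝ) :
    ((1 - exp (I * p)) / (θ : ℂ)).im = -Real.sin p / θ := by
  rw [mul_comm, exp_mul_I]
  simp [div_ofReal_im, sin_ofReal_re]

lemma mul_measureReal_le_norm_setIntegral {X : Type*} [MeasurableSpace X] {μ : Measure X}
    {s : Set X} {G : X → ℂ} {b : ℝ} (hs : MeasurableSet s) (hμs : μ s ≠ ∞)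
    (hG : IntegrableOn G s μ) (hb : ∀ x ∈ s, b ≤ -(G x).im) :
    b * μ.real s ≤ ‖∫ x in s, G x ∂μ‖ :=
  calc b * μ.real s ≤ ∫ x in s, -(G x).im ∂μ :=
        setIntegral_ge_of_const_le_real hs hμs hb hG.im.neg
    _ = -(∫ x in s, G x ∂μ).im := by rw [integral_neg]; exact congrArg _ (integral_im hG)
    _ ≤ ‖∫ x in s, G x ∂μ‖ := (neg_le_abs _).trans (abs_im_le_norm _)

lemma ofReal_mul_sqrt_le_eLpNorm_two {α E : Type*} [MeasurableSpace α] [NormedAddCommGroup E]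
    {μ : Measure α} {F : α → E} {s : Set α} {m : ℝ} (hs : MeasurableSet s) (hμs : μ s ≠ ∞)
    (hm : 0 ≤ m) (hF : ∀ x ∈ s, m ≤ ‖F x‖) :
    ENNReal.ofReal (m * √(μ.real s)) ≤ eLpNorm F 2 μ :=
  calc ENNReal.ofReal (m * √(μ.real s)) = eLpNorm (s.indicator fun _ => m) 2 μ := by
        rw [eLpNorm_indicator_const hs two_ne_zero ENNReal.ofNat_ne_top, Real.enorm_eq_ofReal hm,
          ← ofReal_measureReal hμs, ENNReal.ofReal_rpow_of_nonneg measureReal_nonneg (by norm_num),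
          ← ENNReal.ofReal_mul hm, Real.sqrt_eq_rpow]
        norm_num
    _ ≤ eLpNorm F 2 μ := eLpNorm_mono fun x => by
        by_cases hx : x ∈ s
        · simpa [hx, abs_of_nonneg hm] using hF x hx
        · simp [hx]

lemma eLpNorm_indicator_Icc_one {a b : ℝ} (hab : a ≤ b) :
    eLpNorm ((Icc a b).indicator fun _ => (1 : ℂ)) 2 volume = ENNReal.ofReal √(b - a) := by
  rw [eLpNorm_indicator_const measurableSet_Icc two_ne_zero ENNReal.ofNat_ne_top, Real.volume_Icc,
    enorm_one, one_mul, ENNReal.ofReal_rpow_of_nonneg (by linarith) (by norm_num),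
    Real.sqrt_eq_rpow]
  norm_num

lemma nonpos_of_eventually_rpow_le {e K : ℝ} (h : ∀ᶠ N in Filter.atTop, N ^ e ≤ K) : e ≤ 0 := by
  by_contra! he
  obtain ⟨N, hNK, hKN⟩ := (h.and ((tendsto_rpow_atTop he).eventually_gt_atTop K)).exists
  linarith

lemma rpow_sub_four_mul_div_two {N : ℝ} (hN : 0 < N) (s₁ s₂ : ℝ) :
    N ^ ((s₂ - 4 * s₁) / 2) = √N ^ s₂ / (N ^ s₁) ^ 2 := by
  rw [show (s₂ - 4 * s₁) / 2 = 1 / 2 * s₂ - s₁ * 2 by ring, Real.rpow_sub hN,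
    Real.rpow_mul hN.le, Real.rpow_mul hN.le, Real.sqrt_eq_rpow]
  norm_cast

/-- The root of `a² - a = 2N`, so that the resonance function `ξ - 2ξ₁ - ξ²` vanishes at
`(ξ, ξ₁) = (a, -N)`. -/
def resonantFreq (N : ℝ) : ℝ := 1 / 2 + √(2 * N + 1 / 4)

def testF (N : ℝ) : ℝ → ℂ := (Icc (-N) (-N + N⁻¹)).indicator fun _ => 1

def testG (N : ℝ) : ℝ → ℂ :=
  (Icc (resonantFreq N + N - N⁻¹) (resonantFreq N + N + N⁻¹)).indicator fun _ => 1

def weightedKernel (s₁ ξ ξ₁ : ℝ) : ℂ :=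
  (1 - Complex.exp (Complex.I * ((ξ * (ξ - 2 * ξ₁ - ξ ^ 2) : ℝ) : ℂ))) /
    ((ξ - 2 * ξ₁ - ξ ^ 2 : ℝ) : ℂ) / ((jap ξ₁ ^ s₁ * jap (ξ - ξ₁) ^ s₁ : ℝ) : ℂ)

lemma continuousOn_weightedKernel (s₁ ξ : ℝ) :
    ContinuousOn (weightedKernel s₁ ξ) {ξ₁ | ξ - 2 * ξ₁ - ξ ^ 2 ≠ 0} := by
  have hweight : Continuous fun ξ₁ => jap ξ₁ ^ s₁ * jap (ξ - ξ₁) ^ s₁ :=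
    ((continuous_jap.rpow_const fun _ => .inl (jap_pos _).ne').mul
      ((continuous_jap.comp (continuous_sub_left ξ)).rpow_const fun _ => .inl (jap_pos _).ne'))
  refine ContinuousOn.div (ContinuousOn.div (by fun_prop) (by fun_prop) fun ξ₁ hξ₁ => ?_)
    (continuous_ofReal.comp hweight).continuousOn fun ξ₁ _ => ?_
  · exact ofReal_ne_zero.2 hξ₁
  · exact ofReal_ne_zero.2 (mul_pos (Real.rpow_pos_of_pos (jap_pos _) _)
      (Real.rpow_pos_of_pos (jap_pos _) _)).ne'

lemma neg_im_weightedKernel {s₁ ξ ξ₁ : ℝ} (hθ : ξ - 2 * ξ₁ - ξ ^ 2 ≠ 0) :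
    -(weightedKernel s₁ ξ ξ₁).im =
      ξ * Real.sinc (ξ * (ξ - 2 * ξ₁ - ξ ^ 2)) / (jap ξ₁ ^ s₁ * jap (ξ - ξ₁) ^ s₁) := by
  rw [weightedKernel, div_ofReal_im, im_one_sub_exp_mul_I_div, neg_div, neg_div, neg_neg,
    sin_mul_div_eq_mul_sinc ξ hθ]

section TestPair

variable {N ξ x : ℝ}

local notation "a" => resonantFreq N

lemma resonantFreq_sq_sub (hN : 0 ≤ N) : a ^ 2 - a = 2 * N := by
  have := Real.sq_sqrt (show 0 ≤ 2 * N + 1 / 4 by linarith)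
  unfold resonantFreq
  linear_combination this

lemma sqrt_le_resonantFreq (hN : 0 ≤ N) : √N ≤ a := by
  have := Real.sqrt_le_sqrt (show N ≤ 2 * N + 1 / 4 by linarith)
  unfold resonantFreq
  linarith

lemma resonantFreq_le (hN : 1 ≤ N) : a ≤ 3 * √N := by
  have h4 : √(4 * N) = 2 * √N := by
    rw [Real.sqrt_mul (by norm_num), show (4 : ℝ) = 2 ^ 2 by norm_num, Real.sqrt_sq (by norm_num)]
  have := Real.sqrt_le_sqrt (show 2 * N + 1 / 4 ≤ 4 * N by linarith)
  have := Real.one_le_sqrt.2 hN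
  unfold resonantFreq
  linarith

lemma resonance_eq (hN : 0 ≤ N) (ξ x : ℝ) :
    ξ - 2 * x - ξ ^ 2 = -((ξ - a) * (ξ + a - 1)) - 2 * (x + N) := by
  linear_combination -(resonantFreq_sq_sub hN)

lemma hundred_le_sqrt (hN : 10000 ≤ N) : 100 ≤ √N :=
  Real.le_sqrt_of_sq_le (by linarith)

lemma sqrt_le_and_le_of_mem_Ioc (hN : 10000 ≤ N) (hξ : ξ ∈ Ioc a (a + N⁻¹ / 100)) :
    √N ≤ ξ ∧ ξ ≤ 4 * √N := by
  have := inv_le_one_of_one_le₀ (show 1 ≤ N by linarith)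
  constructor <;>
  linarith [hξ.1, hξ.2, sqrt_le_resonantFreq (N := N) (by linarith),
    resonantFreq_le (N := N) (by linarith), hundred_le_sqrt hN]

lemma resonance_neg (hN : 0 ≤ N) (hξ : a < ξ) (hx : -N ≤ x) : ξ - 2 * x - ξ ^ 2 < 0 := by
  have : 1 / 2 ≤ a := by unfold resonantFreq; linarith [Real.sqrt_nonneg (2 * N + 1 / 4)]
  rw [resonance_eq hN]
  nlinarith [mul_pos (sub_pos.2 hξ) (show 0 < ξ + a - 1 by linarith)]

lemma abs_mul_resonance_le_one (hN : 10000 ≤ N) (hξ : ξ ∈ Ioc a (a + N⁻¹ / 100))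
    (hx : x ∈ Icc (-N) (-N + N⁻¹)) : |ξ * (ξ - 2 * x - ξ ^ 2)| ≤ 1 := by
  obtain ⟨hξM, hξ4M⟩ := sqrt_le_and_le_of_mem_Ioc hN hξ
  have hM := hundred_le_sqrt hN
  have hNε : N⁻¹ * √N ^ 2 = 1 := by
    rw [Real.sq_sqrt (by linarith), inv_mul_cancel₀ (by linarith)]
  have hε : 0 < N⁻¹ := by positivity
  have hθ := resonance_neg (by linarith) hξ.1 hx.1
  have hfactor : (ξ - a) * (ξ + a - 1) ≤ N⁻¹ / 100 * (7 * √N) :=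
    mul_le_mul (by linarith [hξ.2]) (by linarith [resonantFreq_le (N := N) (by linarith)])
      (by linarith [sqrt_le_resonantFreq (N := N) (by linarith)]) (by positivity)
  have hθ_le : -(ξ - 2 * x - ξ ^ 2) ≤ N⁻¹ * √N / 10 := by
    rw [resonance_eq (N := N) (by linarith)]
    nlinarith [hx.2, mul_le_mul_of_nonneg_left hM hε.le]
  have := mul_le_mul hξ4M hθ_le (by linarith) (by linarith)
  rw [abs_of_neg (mul_neg_of_pos_of_neg (by linarith) hθ)]
  nlinarith

lemma sub_mem_Icc_of_mem (hN : 10000 ≤ N) (hξ : ξ ∈ Ioc a (a + N⁻¹ / 100))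
    (hx : x ∈ Icc (-N) (-N + N⁻¹)) : ξ - x ∈ Icc (a + N - N⁻¹) (a + N + N⁻¹) := by
  have : 0 < N⁻¹ := inv_pos.2 (by linarith)
  constructor <;> linarith [hξ.1, hξ.2, hx.1, hx.2]

lemma weight_le (s₁ : ℝ) (hN : 10000 ≤ N) (hξ : ξ ∈ Ioc a (a + N⁻¹ / 100))
    (hx : x ∈ Icc (-N) (-N + N⁻¹)) :
    jap x ^ s₁ * jap (ξ - x) ^ s₁ ≤ (2 ^ |s₁| * N ^ s₁) ^ 2 := by
  obtain ⟨hξM, hξ4M⟩ := sqrt_le_and_le_of_mem_Ioc hN hξ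
  have hM := hundred_le_sqrt hN
  have hMN : √N * √N = N := Real.mul_self_sqrt (by linarith)
  have hε : N⁻¹ ≤ 1 := inv_le_one_of_one_le₀ (by linarith)
  have hjx : jap x ^ s₁ ≤ 2 ^ |s₁| * N ^ s₁ := by
    have habs : |x| = -x := abs_of_neg (by linarith [hx.2])
    refine rpow_le_rpow_abs_mul_rpow s₁ (jap_pos x) (by linarith) ?_ ?_
    · linarith [jap_le_abs_add_one x, hx.1]
    · linarith [abs_le_jap x, hx.2]
  have hjξx : jap (ξ - x) ^ s₁ ≤ 2 ^ |s₁| * N ^ s₁ := by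
    have habs : |ξ - x| = ξ - x := abs_of_pos (by linarith [hx.2])
    refine rpow_le_rpow_abs_mul_rpow s₁ (jap_pos _) (by linarith) ?_ ?_
    · nlinarith [jap_le_abs_add_one (ξ - x), hx.1]
    · linarith [abs_le_jap (ξ - x), hx.2]
  rw [sq]
  exact mul_le_mul hjx hjξx (Real.rpow_nonneg (jap_pos _).le _) (by positivity)

lemma rpow_sqrt_le_jap_rpow (s₂ : ℝ) (hN : 10000 ≤ N) (hξ : ξ ∈ Ioc a (a + N⁻¹ / 100)) :
    √N ^ s₂ ≤ 5 ^ |s₂| * jap ξ ^ s₂ := by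
  obtain ⟨hξM, hξ4M⟩ := sqrt_le_and_le_of_mem_Ioc hN hξ
  have hM := hundred_le_sqrt hN
  have habs : |ξ| = ξ := abs_of_pos (by linarith)
  refine rpow_le_rpow_abs_mul_rpow s₂ (by linarith) (jap_pos ξ) ?_ ?_
  · linarith [abs_le_jap ξ]
  · linarith [jap_le_abs_add_one ξ]

lemma le_neg_im_weightedKernel (s₁ : ℝ) (hN : 10000 ≤ N) (hξ : ξ ∈ Ioc a (a + N⁻¹ / 100))
    (hx : x ∈ Icc (-N) (-N + N⁻¹)) :
    5 / 6 * √N / (2 ^ |s₁| * N ^ s₁) ^ 2 ≤ -(weightedKernel s₁ ξ x).im := by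
  have hξM := (sqrt_le_and_le_of_mem_Ioc hN hξ).1
  have hξ0 : 0 ≤ ξ := by linarith [Real.sqrt_nonneg N]
  have hweight : 0 < jap x ^ s₁ * jap (ξ - x) ^ s₁ :=
    mul_pos (Real.rpow_pos_of_pos (jap_pos _) _) (Real.rpow_pos_of_pos (jap_pos _) _)
  have hsinc := five_sixths_le_sinc (abs_mul_resonance_le_one hN hξ hx)
  rw [neg_im_weightedKernel (resonance_neg (by linarith) hξ.1 hx.1).ne]
  calc 5 / 6 * √N / (2 ^ |s₁| * N ^ s₁) ^ 2 ≤ 5 / 6 * ξ / (jap x ^ s₁ * jap (ξ - x) ^ s₁) :=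
        div_le_div₀ (by positivity) (by linarith) hweight (weight_le s₁ hN hξ hx)
    _ ≤ _ := div_le_div_of_nonneg_right (by nlinarith) hweight.le

lemma norm_integral_weightedKernel_ge (s₁ : ℝ) (hN : 10000 ≤ N)
    (hξ : ξ ∈ Ioc a (a + N⁻¹ / 100)) :
    5 / 6 * √N / (2 ^ |s₁| * N ^ s₁) ^ 2 * N⁻¹ ≤
      ‖∫ x in Icc (-N) (-N + N⁻¹), weightedKernel s₁ ξ x‖ := by
  have hint : IntegrableOn (weightedKernel s₁ ξ) (Icc (-N) (-N + N⁻¹)) :=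
    ((continuousOn_weightedKernel s₁ ξ).mono fun x hx =>
      (resonance_neg (by linarith) hξ.1 hx.1).ne).integrableOn_Icc
  have := mul_measureReal_le_norm_setIntegral measurableSet_Icc measure_Icc_lt_top.ne hint
    fun x hx => le_neg_im_weightedKernel s₁ hN hξ hx
  rwa [Real.volume_real_Icc, add_sub_cancel_left,
    max_eq_left (inv_nonneg.2 (by linarith))] at this

lemma sToKdV_testPair_eq (s₁ s₂ : ℝ) (hN : 10000 ≤ N) (hξ : ξ ∈ Ioc a (a + N⁻¹ / 100)) :
    sToKdV s₁ s₂ (testF N) (testG N) ξ =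
      jap ξ ^ s₂ * ‖∫ x in Icc (-N) (-N + N⁻¹), weightedKernel s₁ ξ x‖ := by
  rw [sToKdV, ← integral_indicator measurableSet_Icc]
  congr 3
  funext x
  by_cases hx : x ∈ Icc (-N) (-N + N⁻¹)
  · simp [testF, testG, hx, sub_mem_Icc_of_mem hN hξ hx, weightedKernel]
  · simp [testF, hx]

lemma sToKdV_testPair_ge (s₁ s₂ : ℝ) (hN : 10000 ≤ N) (hξ : ξ ∈ Ioc a (a + N⁻¹ / 100)) :
    5 / 6 / (5 ^ |s₂| * (2 ^ |s₁|) ^ 2) * N ^ ((s₂ - 4 * s₁) / 2) / √N ≤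
      sToKdV s₁ s₂ (testF N) (testG N) ξ := by
  have hN0 : 0 < N := by linarith
  have hM : 0 < √N := Real.sqrt_pos.2 hN0
  calc 5 / 6 / (5 ^ |s₂| * (2 ^ |s₁|) ^ 2) * N ^ ((s₂ - 4 * s₁) / 2) / √N
      = √N ^ s₂ / 5 ^ |s₂| * (5 / 6 * √N / (2 ^ |s₁| * N ^ s₁) ^ 2 * N⁻¹) := by
        rw [rpow_sub_four_mul_div_two hN0]
        field_simp
        exact (Real.sq_sqrt hN0.le).symm
    _ ≤ jap ξ ^ s₂ * ‖∫ x in Icc (-N) (-N + N⁻¹), weightedKernel s₁ ξ x‖ :=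
        mul_le_mul ((div_le_iff₀' (by positivity)).2 (rpow_sqrt_le_jap_rpow s₂ hN hξ))
          (norm_integral_weightedKernel_ge s₁ hN hξ) (by positivity)
          (Real.rpow_nonneg (jap_pos ξ).le _)
    _ = sToKdV s₁ s₂ (testF N) (testG N) ξ := (sToKdV_testPair_eq s₁ s₂ hN hξ).symm

end TestPair

lemma testPair_estimate {s₁ s₂ C N : ℝ} (hC : 0 < C)
    (hbound : ∀ f g : ℝ → ℂ, eLpNorm (fun ξ : ℝ => sToKdV s₁ s₂ f g ξ) 2 volume ≤
        ENNReal.ofReal C * eLpNorm f 2 volume * eLpNorm g 2 volume) (hN : 10000 ≤ N) :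
    5 / 6 / (5 ^ |s₂| * (2 ^ |s₁|) ^ 2) * N ^ ((s₂ - 4 * s₁) / 2) / √N * √(N⁻¹ / 100) ≤
      C * √(N⁻¹) * √(2 * N⁻¹) := by
  have hN0 : 0 < N := by linarith
  have hlow := ofReal_mul_sqrt_le_eLpNorm_two (μ := volume) measurableSet_Ioc
    measure_Ioc_lt_top.ne (by positivity)
    fun ξ hξ => (sToKdV_testPair_ge s₁ s₂ hN hξ).trans (Real.le_norm_self _)
  have hupper := hlow.trans (hbound (testF N) (testG N))
  rwa [testF, testG, eLpNorm_indicator_Icc_one (by simp [hN0.le]),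
    eLpNorm_indicator_Icc_one (by linarith [inv_pos.2 hN0]), ← ENNReal.ofReal_mul hC.le,
    ← ENNReal.ofReal_mul (by positivity), ENNReal.ofReal_le_ofReal_iff (by positivity),
    Real.volume_real_Ioc, add_sub_cancel_left, max_eq_left (by positivity),
    show -N + N⁻¹ - -N = N⁻¹ by ring,
    show resonantFreq N + N + N⁻¹ - (resonantFreq N + N - N⁻¹) = 2 * N⁻¹ by ring] at hupper

lemma exists_rpow_le_of_bounded {s₁ s₂ C : ℝ} (hC : 0 < C)
    (hbound : ∀ f g : ℝ → ℂ, eLpNorm (fun ξ : ℝ => sToKdV s₁ s₂ f g ξ) 2 volume ≤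
        ENNReal.ofReal C * eLpNorm f 2 volume * eLpNorm g 2 volume) :
    ∃ K, ∀ N : ℝ, 10000 ≤ N → N ^ ((s₂ - 4 * s₁) / 2) ≤ K := by
  refine ⟨12 * √2 * C * 5 ^ |s₂| * (2 ^ |s₁|) ^ 2, fun N hN => ?_⟩
  have hN0 : 0 < N := by linarith
  have hM : 0 < √N := Real.sqrt_pos.2 hN0
  have h := testPair_estimate hC hbound hN
  rw [Real.sqrt_div' _ (by norm_num), Real.sqrt_mul' _ (inv_nonneg.2 hN0.le), Real.sqrt_inv,
    show (100 : ℝ) = 10 ^ 2 by norm_num, Real.sqrt_sq (by norm_num)] at h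
  field_simp at h
  linarith

end SToKdV

/-- Necessity: `L² × L² → L²` boundedness of the Schrödinger-to-KdV second iterate
forces `s₂ ≤ 4s₁`. -/
theorem s_to_kdv_necessity (s₁ s₂ : ℝ)
    (h : ∃ C : ℝ, 0 < C ∧ ∀ f g : ℝ → ℂ,
      eLpNorm (fun ξ : ℝ => sToKdV s₁ s₂ f g ξ) 2 volume ≤
        ENNReal.ofReal C * eLpNorm f 2 volume * eLpNorm g 2 volume) :
    s₂ ≤ 4 * s₁ := by
  obtain ⟨C, hC, hbound⟩ := h
  obtain ⟨K, hK⟩ := SToKdV.exists_rpow_le_of_bounded hC hbound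
  have := SToKdV.nonpos_of_eventually_rpow_le (Filter.eventually_atTop.2 ⟨10000, hK⟩)
  linarith
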